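/- Let z : Finset ℂ, let k : ℂ → ℂ, and let f : ℂ → ℂ be continuously differentiable over ℝ (ContDiff ℝ 1 f) with compact support. Then ∫ w, (∑_{x ∈ z} k x / (w - x)) * (∂̄f)(w) ∂volume = -π * ∑_{x ∈ z} k x * f x, where ∂̄f(w) := (fderiv ℝ f w 1 + Complex.I * fderiv ℝ f w Complex.I) / 2. -/

import Mathlib

/-!
By linearity it suffices to treat a single pole, and by translation the pole `0`.
In polar coordinates `w = r e^{iθ}` the Jacobian `r` cancels the kernel `1 / w`: writing
`G (r, θ) = g (r e^{iθ})`, one has `r ∂̄g(w) / w = (∂_r G + (i / r) ∂_θ G) / 2`. Along every ray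
`∂_r G` integrates to `-g 0` because `g` has compact support, and around every circle `∂_θ G`
integrates to `0` by periodicity, so `∫ ∂̄g(w) / w = 2π · (-g 0) / 2 = -π g 0`.
-/

open MeasureTheory

/-- The Wirtinger antiholomorphic derivative `∂̄f` of `f : ℂ → ℂ` viewed as ℝ-differentiable. -/
noncomputable def dbar (f : ℂ → ℂ) (w : ℂ) : ℂ :=
  (fderiv ℝ f w 1 + Complex.I * fderiv ℝ f w Complex.I) / 2

open Set Filter Real Complex ComplexConjugate

lemma ContinuousLinearMap.apply_add_I_mul_apply_I_mul (D : ℂ →L[ℝ] ℂ) (c : ℂ) :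
    D c + I * D (I * c) = conj c * (D 1 + I * D I) := by
  have hD (s t : ℝ) : D (s + t * I) = s * D 1 + t * D I := by
    have := D.map_add (s • 1) (t • I)
    rwa [D.map_smul, D.map_smul, Complex.real_smul, Complex.real_smul, Complex.real_smul,
      Complex.real_smul, mul_one] at this
  obtain ⟨a, b, rfl⟩ : ∃ a b : ℝ, c = a + b * I := ⟨c.re, c.im, (re_add_im c).symm⟩
  have hIc : I * (a + b * I) = ((-b : ℝ) : ℂ) + a * I := by
    push_cast; linear_combination (b : ℂ) * I_sq
  rw [hIc, hD, hD]
  simp only [map_add, map_mul, conj_ofReal, conj_I]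
  push_cast
  linear_combination (b : ℂ) * D I * I_sq

lemma dbar_comp_add_right (f : ℂ → ℂ) (x u : ℂ) :
    dbar (fun w => f (w + x)) u = dbar f (u + x) := by
  simp only [dbar, fderiv_comp_add_right]

lemma ContDiff.continuous_dbar {f : ℂ → ℂ} (hf : ContDiff ℝ 1 f) : Continuous (dbar f) := by
  have hDf := hf.continuous_fderiv one_ne_zero
  unfold dbar
  fun_prop

lemma HasCompactSupport.dbar {f : ℂ → ℂ} (hf : HasCompactSupport f) :
    HasCompactSupport (dbar f) :=
  (hf.fderiv ℝ).comp_left (g := fun L : ℂ →L[ℝ] ℂ => (L 1 + I * L I) / 2) (by simp)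

lemma smul_dbar_div_ofReal_mul_exp (g : ℂ → ℂ) {r : ℝ} (hr : r ≠ 0) (θ : ℝ) :
    r • (dbar g (r * exp (θ * I)) / (r * exp (θ * I))) =
      (fderiv ℝ g (r * exp (θ * I)) (exp (θ * I)) +
        I * fderiv ℝ g (r * exp (θ * I)) (I * exp (θ * I))) / 2 := by
  rw [(fderiv ℝ g _).apply_add_I_mul_apply_I_mul, ← exp_conj, map_mul, conj_ofReal, conj_I,
    mul_neg, Complex.exp_neg, dbar, Complex.real_smul]
  have : (r : ℂ) ≠ 0 := ofReal_ne_zero.mpr hr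
  field_simp

lemma locallyIntegrable_inv : LocallyIntegrable (fun w : ℂ => w⁻¹) :=
  locallyIntegrable_of_norm_le_rpow (C := 1) (α := 1) (by simp) (by simp)
    (ae_of_all _ fun w => by simp [Real.rpow_neg_one]) measurable_inv.aestronglyMeasurable

lemma integrable_div_sub {h : ℂ → ℂ} (hc : Continuous h) (hs : HasCompactSupport h) (x : ℂ) :
    Integrable (fun w => h w / (w - x)) := by
  have := locallyIntegrable_inv.integrable_smul_right_of_hasCompactSupport
    (hc.comp (continuous_add_const x)) (hs.comp_homeomorph (Homeomorph.addRight x))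
  simpa [div_eq_inv_mul] using this.comp_sub_right x

lemma setIntegral_prod_symm {E : Type*} [NormedAddCommGroup E] [NormedSpace ℝ E] (F : ℝ × ℝ → E)
    {s t : Set ℝ} (hF : IntegrableOn F (s ×ˢ t)) :
    ∫ p in s ×ˢ t, F p = ∫ y in t, ∫ x in s, F (x, y) := by
  rw [IntegrableOn, Measure.volume_eq_prod, ← Measure.prod_restrict] at hF
  rw [Measure.volume_eq_prod, ← Measure.prod_restrict, integral_prod_symm F hF]

lemma integrableOn_Ioi_prod_of_eq_zero {E : Type*} [NormedAddCommGroup E] {F : ℝ × ℝ → E}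
    (hF : Continuous F) {R : ℝ} (hR : ∀ p : ℝ × ℝ, R < p.1 → F p = 0) (a b : ℝ) :
    IntegrableOn F (Ioi 0 ×ˢ Ioo a b) := by
  have hK : IntegrableOn F (Icc 0 R ×ˢ Icc a b) :=
    hF.continuousOn.integrableOn_compact (isCompact_Icc.prod isCompact_Icc)
  refine hK.of_forall_sdiff_eq_zero (measurableSet_Ioi.prod measurableSet_Ioo) ?_
  rintro ⟨r, θ⟩ ⟨⟨hr, hθ⟩, hout⟩
  exact hR _ (not_le.mp fun hle => hout ⟨⟨hr.le, hle⟩, Ioo_subset_Icc_self hθ⟩)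

lemma HasCompactSupport.integral_Ioi_fderiv_smul_apply {E F : Type*} [NormedAddCommGroup E]
    [NormedSpace ℝ E] [NormedAddCommGroup F] [NormedSpace ℝ F] [CompleteSpace F] {g : E → F}
    (hg : ContDiff ℝ 1 g) (hs : HasCompactSupport g) {v : E} (hv : v ≠ 0) :
    ∫ r in Ioi (0 : ℝ), fderiv ℝ g (r • v) v = -g 0 := by
  have hray := isClosedEmbedding_smul_left (𝕜 := ℝ) hv
  have hDg := hg.continuous_fderiv one_ne_zero
  have hderiv (r : ℝ) : HasDerivAt (fun r : ℝ => g (r • v)) (fderiv ℝ g (r • v) v) r := by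
    simpa [Function.comp_def] using (hg.differentiable one_ne_zero _).hasFDerivAt.comp_hasDerivAt r
      ((hasDerivAt_id r).smul_const v)
  have hint : Integrable fun r : ℝ => fderiv ℝ g (r • v) v :=
    (by fun_prop : Continuous fun r : ℝ => fderiv ℝ g (r • v) v).integrable_of_hasCompactSupport
      (((hs.fderiv ℝ).comp_isClosedEmbedding hray).comp_left (g := fun L : E →L[ℝ] F => L v) rfl)
  have htendsto : Tendsto (fun r : ℝ => g (r • v)) atTop (nhds 0) :=
    (hs.comp_isClosedEmbedding hray).is_zero_at_infty.mono_left atTop_le_cocompact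
  simpa using integral_Ioi_of_hasDerivAt_of_tendsto (hderiv 0).continuousAt.continuousWithinAt
    (fun r _ => hderiv r) hint.integrableOn htendsto

lemma integral_Ioo_fderiv_ofReal_mul_exp_apply_I_mul {E : Type*} [NormedAddCommGroup E]
    [NormedSpace ℝ E] [CompleteSpace E] {g : ℂ → E}
    (hg : ContDiff ℝ 1 g) {r : ℝ} (hr : r ≠ 0) :
    ∫ θ in Ioo (-π) π, fderiv ℝ g (r * exp (θ * I)) (I * exp (θ * I)) = 0 := by
  have hDg := hg.continuous_fderiv one_ne_zero
  have hderiv (θ : ℝ) : HasDerivAt (fun θ : ℝ => g (r * exp (θ * I)))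
      (r • fderiv ℝ g (r * exp (θ * I)) (I * exp (θ * I))) θ := by
    have hcirc : HasDerivAt (fun θ : ℝ => (r : ℂ) * exp (θ * I)) (r • (I * exp (θ * I))) θ := by
      simpa [Complex.real_smul, mul_comm, mul_left_comm] using
        (((ofRealCLM.hasDerivAt (x := θ)).mul_const I).cexp).const_mul (r : ℂ)
    rw [← map_smul]
    exact (hg.differentiable one_ne_zero _).hasFDerivAt.comp_hasDerivAt θ hcirc
  have hperiod : g (r * exp (π * I)) = g (r * exp (↑(-π) * I)) := by
    rw [ofReal_neg, neg_mul, exp_neg_pi_mul_I, exp_pi_mul_I]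
  have hcont : Continuous fun θ : ℝ => fderiv ℝ g (r * exp (θ * I)) (I * exp (θ * I)) := by
    fun_prop
  have := intervalIntegral.integral_eq_sub_of_hasDerivAt (fun θ _ => hderiv θ)
    ((hcont.const_smul r).intervalIntegrable (-π) π)
  rw [hperiod, sub_self, intervalIntegral.integral_smul, smul_eq_zero,
    intervalIntegral.integral_of_le (by linarith [pi_pos]), integral_Ioc_eq_integral_Ioo] at this
  exact this.resolve_left hr

lemma integrableOn_polarCoord_target_fderiv_apply {F : Type*} [NormedAddCommGroup F]
    [NormedSpace ℝ F] {g : ℂ → F} (hg : ContDiff ℝ 1 g) (hs : HasCompactSupport g) {v : ℝ → ℂ}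
    (hv : Continuous v) :
    IntegrableOn (fun p : ℝ × ℝ => fderiv ℝ g (p.1 * exp (p.2 * I)) (v p.2)) polarCoord.target := by
  have hDg := hg.continuous_fderiv one_ne_zero
  obtain ⟨R, -, hR⟩ := (hs.fderiv ℝ).exists_pos_le_norm
  refine integrableOn_Ioi_prod_of_eq_zero (R := R) (by fun_prop) (fun p hp => ?_) _ _
  rw [hR _ (by simpa [norm_exp_ofReal_mul_I] using hp.le.trans (le_abs_self _)),
    zero_apply]

lemma integral_dbar_div_self {g : ℂ → ℂ} (hg : ContDiff ℝ 1 g) (hs : HasCompactSupport g) :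
    ∫ w, dbar g w / w = -π * g 0 := by
  set Fr : ℝ × ℝ → ℂ := fun p => fderiv ℝ g (p.1 * exp (p.2 * I)) (exp (p.2 * I))
  set Fθ : ℝ × ℝ → ℂ := fun p => fderiv ℝ g (p.1 * exp (p.2 * I)) (I * exp (p.2 * I))
  have hFr : IntegrableOn Fr polarCoord.target :=
    integrableOn_polarCoord_target_fderiv_apply hg hs (v := fun θ => exp (θ * I)) (by fun_prop)
  have hFθ : IntegrableOn Fθ polarCoord.target :=
    integrableOn_polarCoord_target_fderiv_apply hg hs (v := fun θ => I * exp (θ * I)) (by fun_prop)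
  have hradial : ∫ p in polarCoord.target, Fr p = (2 * π) • (-g 0) := by
    have hray (θ : ℝ) : ∫ r in Ioi 0, Fr (r, θ) = -g 0 := by
      simpa [Fr, Complex.real_smul] using hs.integral_Ioi_fderiv_smul_apply hg (exp_ne_zero (θ * I))
    rw [polarCoord_target, setIntegral_prod_symm _ hFr]
    simp_rw [hray]
    rw [setIntegral_const, volume_real_Ioo_of_le (by linarith [pi_pos])]
    ring_nf
  have hangular : ∫ p in polarCoord.target, Fθ p = 0 := by
    refine (setIntegral_prod Fθ hFθ).trans ?_
    refine (setIntegral_congr_fun measurableSet_Ioi fun r hr => ?_).trans (integral_zero _ _)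
    exact integral_Ioo_fderiv_ofReal_mul_exp_apply_I_mul hg hr.ne'
  calc ∫ w, dbar g w / w
      = ∫ p in polarCoord.target,
          p.1 • (dbar g (Complex.polarCoord.symm p) / Complex.polarCoord.symm p) :=
        (Complex.integral_comp_polarCoord_symm _).symm
    _ = ∫ p in polarCoord.target, (Fr p + I * Fθ p) / 2 :=
        setIntegral_congr_fun polarCoord.open_target.measurableSet fun p hp => by
          simp only [Complex.polarCoord_symm_apply, ofReal_cos, ofReal_sin, ← exp_mul_I]
          exact smul_dbar_div_ofReal_mul_exp g hp.1.ne' p.2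
    _ = ((∫ p in polarCoord.target, Fr p) + I * ∫ p in polarCoord.target, Fθ p) / 2 := by
        rw [integral_div, integral_add hFr (hFθ.const_mul I), integral_const_mul]
    _ = -π * g 0 := by
        rw [hradial, hangular, Complex.real_smul]
        push_cast
        ring

lemma integral_dbar_div_sub {f : ℂ → ℂ} (hf : ContDiff ℝ 1 f) (hs : HasCompactSupport f) (x : ℂ) :
    ∫ w, dbar f w / (w - x) = -π * f x := by
  have := integral_dbar_div_self (g := fun w => f (w + x))
    (hf.comp (contDiff_id.add contDiff_const)) (hs.comp_homeomorph (Homeomorph.addRight x))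
  simp_rw [dbar_comp_add_right] at this
  rw [← integral_add_right_eq_self _ x]
  simpa using this

/-- Scalar form of Lemma 2.3: the integral of a rational 1-form with simple poles against
the `∂̄`-differential of a compactly supported function localises to the residues. -/
theorem cauchy_pompeiu_simple_poles (z : Finset ℂ) (k : ℂ → ℂ) (f : ℂ → ℂ)
    (hf : ContDiff ℝ 1 f) (hsupp : HasCompactSupport f) :
    ∫ w : ℂ, (∑ x ∈ z, k x / (w - x)) * dbar f w ∂volume
      = -(Real.pi : ℂ) * ∑ x ∈ z, k x * f x := by
  have hint (x : ℂ) : Integrable fun w => dbar f w / (w - x) :=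
    integrable_div_sub hf.continuous_dbar hsupp.dbar x
  calc ∫ w : ℂ, (∑ x ∈ z, k x / (w - x)) * dbar f w
      = ∫ w : ℂ, ∑ x ∈ z, k x * (dbar f w / (w - x)) := by
        congr 1 with w
        rw [Finset.sum_mul]
        exact Finset.sum_congr rfl fun x _ => by ring
    _ = ∑ x ∈ z, k x * (-π * f x) := by
        rw [integral_finsetSum z fun x _ => (hint x).const_mul (k x)]
        simp_rw [integral_const_mul, integral_dbar_div_sub hf hsupp]
    _ = -π * ∑ x ∈ z, k x * f x := by
        rw [Finset.mul_sum]
        exact Finset.sum_congr rfl fun x _ => by ring
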